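/- arXiv:2403.08102 — 6 statements merged into one kernel-verified Lean document; each statement's English description precedes it below -/
import Mathlib

section
/- For every integer N ≥ 2, there exists v̂ in the open interval (1/2, (N+1)/(2N)) such that A_N(v̂) = B_N(v̂), where A_N(v) = v^{N+1} · 2N/(N+1)^2 and B_N(v) = (v - 1/2) · P_N(v) with P_N(v) = (1/N) Σ_{j=0}^{N-1} v^j. -/
/-!
The gap `B - A` is continuous, negative at `v = 1/2` (where `B` vanishes) and positive at the cap
`c = (N + 1) / (2N)`: there `c - 1/2 = 1/(2N)` and `A c = c ^ (N - 1) / (2N)`, so `B c > A c`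
amounts to `∑_{j<N} c ^ j > N c ^ (N - 1)`, which holds because `c < 1`. Conclude by the
intermediate value theorem.
-/

theorem natCast_mul_pow_pred_lt_sum_range_pow {R : Type*} [Semiring R] [LinearOrder R]
    [IsStrictOrderedRing R] {x : R} (h₀ : 0 ≤ x) (h₁ : x < 1) {n : ℕ} (hn : 2 ≤ n) :
    n * x ^ (n - 1) < ∑ j ∈ Finset.range n, x ^ j := by
  calc (n : R) * x ^ (n - 1) = ∑ _j ∈ Finset.range n, x ^ (n - 1) := by simp
    _ < ∑ j ∈ Finset.range n, x ^ j :=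
      Finset.sum_lt_sum (fun j hj => pow_le_pow_of_le_one h₀ h₁.le (by simp at hj; omega))
        ⟨0, by simp; omega, by simpa using pow_lt_one₀ h₀ h₁ (by omega)⟩

section Cap

variable {K : Type*} [Field K] {N : ℕ}

theorem cap_sub_half [CharZero K] (hN : N ≠ 0) :
    ((N + 1) / (2 * N) : K) - 1 / 2 = 1 / (2 * N) := by
  field_simp
  ring

theorem cap_pow_succ_mul_div [CharZero K] (hN : N ≠ 0) :
    ((N + 1) / (2 * N) : K) ^ (N + 1) * (2 * N) / (N + 1) ^ 2
      = ((N + 1) / (2 * N)) ^ (N - 1) / (2 * N) := by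
  have hN1 : (N + 1 : K) ≠ 0 := by exact_mod_cast N.succ_ne_zero
  rw [show N + 1 = (N - 1) + 2 by omega, pow_add]
  field_simp

variable [LinearOrder K] [IsStrictOrderedRing K]

theorem half_lt_cap (hN : N ≠ 0) : (1 / 2 : K) < (N + 1) / (2 * N) := by
  have : (0 : K) < 1 / (2 * N) := by positivity
  linarith [cap_sub_half (K := K) hN]

theorem cap_lt_one (hN : 2 ≤ N) : ((N + 1) / (2 * N) : K) < 1 := by
  have : (2 : K) ≤ N := by exact_mod_cast hN
  rw [div_lt_one (by positivity)]
  linarith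

end Cap

theorem exists_cutoff (N : ℕ) (hN : 2 ≤ N)
    (A : ℝ → ℝ) (hA : ∀ v, A v = v ^ (N + 1) * (2 * N) / (N + 1) ^ 2)
    (P : ℝ → ℝ) (hP : ∀ v, P v = (1 / N) * ∑ j ∈ Finset.range N, v ^ j)
    (B : ℝ → ℝ) (hB : ∀ v, B v = (v - 1 / 2) * P v) :
    ∃ v ∈ Set.Ioo (1 / 2 : ℝ) ((N + 1) / (2 * N)), A v = B v := by
  set c : ℝ := (N + 1) / (2 * N)
  have hN0 : N ≠ 0 := by omega
  have hA_cont : Continuous A := by rw [funext hA]; fun_prop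
  have hB_cont : Continuous B := by rw [funext hB, funext hP]; fun_prop
  have gap_half : B (1 / 2) - A (1 / 2) < 0 := by
    rw [hA, hB]
    have : (0 : ℝ) < (1 / 2) ^ (N + 1) * (2 * N) / (N + 1) ^ 2 := by positivity
    linarith
  have gap_cap : 0 < B c - A c := by
    have hsum := natCast_mul_pow_pred_lt_sum_range_pow (by positivity : (0 : ℝ) ≤ c)
      (cap_lt_one hN) hN
    rw [hA, hB, hP, cap_sub_half hN0, cap_pow_succ_mul_div hN0]
    calc (0 : ℝ) < (∑ j ∈ Finset.range N, c ^ j - N * c ^ (N - 1)) / (2 * N ^ 2) :=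
          div_pos (by linarith) (by positivity)
      _ = _ := by simp only [c]; field_simp
  obtain ⟨v, hv, hgap⟩ := intermediate_value_Ioo (half_lt_cap hN0).le
    (hB_cont.sub hA_cont).continuousOn ⟨gap_half, gap_cap⟩
  exact ⟨v, hv, by linarith [show B v - A v = 0 from hgap]⟩
end

section
/- Fix N ≥ 2 and v̂ ∈ (1/2, 1). The function b ↦ ((N+1)/(2N) · b)^{N-1} · b · (v - b/2), for fixed v ∈ [0, v̂], attains its maximum over b ∈ [0, 2N/(N+1)·v̂] at b = 2N/(N+1)·v, with maximal value A_N(v) = v^{N+1}·2N/(N+1)^2. -/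
/-!
Substituting `b = 2N/(N+1) · t` turns the profit into `2N/(N+1)² · ((N+1) t^N v - N t^(N+1))`.
Bernoulli's inequality, in the form `(N+1) t^N v ≤ v^(N+1) + N t^(N+1)` (the tangent line of
the convex map `x ↦ x^(N+1)` at `t`), bounds this by `2N v^(N+1)/(N+1)²`, with equality at `t = v`.
-/

theorem add_one_mul_pow_mul_le (n : ℕ) {t v : ℝ} (ht : 0 ≤ t) (hv : 0 ≤ v) :
    (n + 1) * (t ^ n * v) ≤ v ^ (n + 1) + n * t ^ (n + 1) := by
  rcases ht.eq_or_lt with rfl | ht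
  · rcases n with _ | n <;> simp [pow_nonneg hv]
  · have bernoulli := one_add_mul_le_pow (a := v / t - 1)
      (by linarith [div_nonneg hv ht.le]) (n + 1)
    rw [add_sub_cancel, div_pow, le_div_iff₀ (by positivity)] at bernoulli
    have : (1 + ((n + 1 : ℕ) : ℝ) * (v / t - 1)) * t ^ (n + 1)
        = (n + 1) * (t ^ n * v) - n * t ^ (n + 1) := by
      field_simp
      push_cast
      ring
    linarith

noncomputable def bidProfit (N : ℕ) (v b : ℝ) : ℝ :=
  ((N + 1) / (2 * N) * b) ^ (N - 1) * b * (v - b / 2)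

section

variable {N : ℕ}

theorem bidProfit_scaled (hN : N ≠ 0) (v t : ℝ) :
    bidProfit N v (2 * N / (N + 1) * t)
      = 2 * N / (N + 1) ^ 2 * ((N + 1) * (t ^ N * v) - N * t ^ (N + 1)) := by
  have hN' : (N : ℝ) ≠ 0 := by exact_mod_cast hN
  have hcancel : (N + 1) / (2 * N) * (2 * N / (N + 1) * t) = t := by field_simp
  obtain ⟨n, rfl⟩ : ∃ n, N = n + 1 := ⟨N - 1, by omega⟩
  rw [bidProfit, hcancel, Nat.add_sub_cancel]
  push_cast
  field_simp
  ring

theorem bidProfit_le (hN : N ≠ 0) {v b : ℝ} (hv : 0 ≤ v) (hb : 0 ≤ b) :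
    bidProfit N v b ≤ v ^ (N + 1) * (2 * N) / (N + 1) ^ 2 := by
  have hN' : (N : ℝ) ≠ 0 := by exact_mod_cast hN
  set t := (N + 1) / (2 * N) * b with ht
  have hbt : b = 2 * N / (N + 1) * t := by rw [ht]; field_simp
  rw [hbt, bidProfit_scaled hN]
  calc 2 * N / (N + 1) ^ 2 * ((N + 1) * (t ^ N * v) - N * t ^ (N + 1))
      ≤ 2 * N / (N + 1) ^ 2 * v ^ (N + 1) := by
        gcongr
        linarith [add_one_mul_pow_mul_le N (by positivity : 0 ≤ t) hv]
    _ = v ^ (N + 1) * (2 * N) / (N + 1) ^ 2 := by ring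

theorem bidProfit_at_optimum (hN : N ≠ 0) (v : ℝ) :
    bidProfit N v (2 * N / (N + 1) * v) = v ^ (N + 1) * (2 * N) / (N + 1) ^ 2 := by
  rw [bidProfit_scaled hN, ← pow_succ]
  ring

end

theorem interior_foc_general (N : ℕ) (hN : 2 ≤ N) (vhat : ℝ)
    (v : ℝ) (hv : v ∈ Set.Icc (0 : ℝ) vhat)
    (π : ℝ → ℝ)
    (hπ : ∀ b, π b = ((N + 1) / (2 * N) * b) ^ (N - 1) * b * (v - b / 2)) :
    (2 * N / (N + 1) * v ∈ Set.Icc (0 : ℝ) (2 * N / (N + 1) * vhat)) ∧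
      (∀ b ∈ Set.Icc (0 : ℝ) (2 * N / (N + 1) * vhat), π b ≤ π (2 * N / (N + 1) * v)) ∧
      π (2 * N / (N + 1) * v) = v ^ (N + 1) * (2 * N) / (N + 1) ^ 2 := by
  have hN0 : N ≠ 0 := by omega
  obtain ⟨hv0, hvle⟩ := hv
  obtain rfl : π = bidProfit N v := funext hπ
  refine ⟨⟨by positivity, by gcongr⟩, fun b hb => ?_, bidProfit_at_optimum hN0 v⟩
  rw [bidProfit_at_optimum hN0 v]
  exact bidProfit_le hN0 hv0 hb.1

theorem interior_foc (N : ℕ) (hN : 2 ≤ N) (vhat : ℝ) (hvhat : vhat ∈ Set.Ioo (1/2 : ℝ) 1)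
    (v : ℝ) (hv : v ∈ Set.Icc (0 : ℝ) vhat)
    (π : ℝ → ℝ)
    (hπ : ∀ b, π b = ((N + 1) / (2 * N) * b) ^ (N - 1) * b * (v - b / 2)) :
    (2 * N / (N + 1) * v ∈ Set.Icc (0 : ℝ) (2 * N / (N + 1) * vhat)) ∧
      (∀ b ∈ Set.Icc (0 : ℝ) (2 * N / (N + 1) * vhat), π b ≤ π (2 * N / (N + 1) * v)) ∧
      π (2 * N / (N + 1) * v) = v ^ (N + 1) * (2 * N) / (N + 1) ^ 2 :=
  interior_foc_general N hN vhat v hv π hπ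
end

section
/- Fix N ≥ 2 and let v̂_N ∈ (1/2, (N+1)/(2N)) satisfy A_N(v̂_N) = (v̂_N - 1/2)·P_N(v̂_N), where A_N(v) = v^{N+1}·2N/(N+1)^2 and P_N(v) = (1/N)Σ_{j=0}^{N-1} v^j. Then for all v ∈ [0, v̂_N), A_N(v) > P_N(v̂_N)·(v - 1/2). -/
/-! The slope of `A` on `[v, v̂]` is at most `2N/(N+1) · v̂^N`, which is smaller than
`v̂^(N-1) ≤ P(v̂)` because `v̂ < (N+1)/(2N)` and `v̂ ≤ 1`. Hence `v ↦ A v - P(v̂)(v - 1/2)`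
strictly decreases towards its value at `v̂`, which is `0`. -/

open Finset

section

variable {R : Type*}

lemma pow_succ_sub_pow_succ_le [CommRing R] [LinearOrder R] [IsOrderedRing R] {v w : R}
    (hv : 0 ≤ v) (hvw : v ≤ w) (n : ℕ) :
    w ^ (n + 1) - v ^ (n + 1) ≤ (w - v) * (n + 1) * w ^ n := by
  have hw : 0 ≤ w := hv.trans hvw
  have h := abs_pow_sub_pow_le w v (n + 1)
  rwa [abs_of_nonneg (sub_nonneg.2 (pow_le_pow_left₀ hv hvw _)), abs_of_nonneg (sub_nonneg.2 hvw),
    abs_of_nonneg hw, abs_of_nonneg hv, max_eq_left hvw, Nat.add_sub_cancel, Nat.cast_succ] at h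

lemma natCast_mul_pow_pred_le_geom_sum [Semiring R] [PartialOrder R] [IsOrderedRing R] {x : R}
    (hx₀ : 0 ≤ x) (hx₁ : x ≤ 1) (n : ℕ) :
    n * x ^ (n - 1) ≤ ∑ j ∈ range n, x ^ j := by
  simpa [nsmul_eq_mul] using card_nsmul_le_sum (range n) (x ^ ·) (x ^ (n - 1)) fun j hj =>
    pow_le_pow_of_le_one hx₀ hx₁ (Nat.le_sub_one_of_lt (mem_range.1 hj))

end

lemma mul_pow_lt_pow_pred {n : ℕ} (hn : 0 < n) {w : ℝ} (hw : 0 < w)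
    (hwn : w < (n + 1) / (2 * n)) :
    2 * n / (n + 1) * w ^ n < w ^ (n - 1) := by
  obtain ⟨m, rfl⟩ := Nat.exists_eq_add_one_of_ne_zero hn.ne'
  rw [lt_div_iff₀ (by positivity)] at hwn
  rw [div_mul_eq_mul_div, div_lt_iff₀ (by positivity), Nat.add_sub_cancel, pow_succ]
  have := pow_pos hw m
  push_cast at hwn ⊢
  nlinarith

theorem interior_payoff_beats_cap_general (N : ℕ)
    (A : ℝ → ℝ) (hA : ∀ v, A v = v ^ (N + 1) * (2 * N) / (N + 1) ^ 2)
    (P : ℝ → ℝ) (hP : ∀ v, P v = (1 / N) * ∑ j ∈ Finset.range N, v ^ j)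
    (vhat : ℝ) (hvhat : vhat ∈ Set.Ioo (1/2 : ℝ) ((N + 1) / (2 * N)))
    (heq : A vhat = (vhat - 1 / 2) * P vhat) :
    ∀ v ∈ Set.Ico (0 : ℝ) vhat, A v > P vhat * (v - 1 / 2) := by
  rintro v ⟨hv₀, hv⟩
  obtain ⟨hhalf, hcap⟩ := hvhat
  -- for `N = 0` the interval of `v̂` is `(1/2, 0)`, since `1 / 0 = 0`
  have hN : 0 < N := Nat.pos_of_ne_zero fun h => by subst h; norm_num at hcap; linarith
  have hN' : (0 : ℝ) < N := Nat.cast_pos.2 hN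
  have hvhat₁ : vhat ≤ 1 :=
    hcap.le.trans ((div_le_one (by positivity)).2 (by linarith [(Nat.one_le_cast (α := ℝ)).2 hN]))
  have hslope : A vhat - A v ≤ (vhat - v) * (2 * N / (N + 1) * vhat ^ N) := by
    rw [hA, hA, ← sub_div, ← sub_mul, div_le_iff₀ (by positivity)]
    have := pow_succ_sub_pow_succ_le hv₀ hv.le N
    field_simp
    nlinarith
  have hP_ge : vhat ^ (N - 1) ≤ P vhat := by
    rw [hP, one_div, le_inv_mul_iff₀ hN']
    exact natCast_mul_pow_pred_le_geom_sum (by linarith) hvhat₁ N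
  have hlt := mul_pow_lt_pow_pred hN (by linarith) hcap
  nlinarith [mul_lt_mul_of_pos_left (hlt.trans_le hP_ge) (sub_pos.2 hv)]

theorem interior_payoff_beats_cap (N : ℕ) (hN : 2 ≤ N)
    (A : ℝ → ℝ) (hA : ∀ v, A v = v ^ (N + 1) * (2 * N) / (N + 1) ^ 2)
    (P : ℝ → ℝ) (hP : ∀ v, P v = (1 / N) * ∑ j ∈ Finset.range N, v ^ j)
    (vhat : ℝ) (hvhat : vhat ∈ Set.Ioo (1/2 : ℝ) ((N + 1) / (2 * N)))
    (heq : A vhat = (vhat - 1 / 2) * P vhat) :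
    ∀ v ∈ Set.Ico (0 : ℝ) vhat, A v > P vhat * (v - 1 / 2) :=
  interior_payoff_beats_cap_general N A hA P hP vhat hvhat heq
end

section
/- Fix N ≥ 2 and v̂_N ∈ (1/2, (N+1)/(2N)) with A_N(v̂_N) = (v̂_N - 1/2)P_N(v̂_N). Define Â_N(v) = (2N/(N+1))·v̂_N^N·(v - (N/(N+1))v̂_N) for v ∈ (v̂_N, (2N/(N+1))v̂_N] and Â_N(v) = v̂_N^{N-1}·v²/2 for v ∈ ((2N/(N+1))v̂_N, 1]. Then Â_N is continuously differentiable on (v̂_N, 1], Â_N(v̂_N⁺) limits to A_N(v̂_N), and P_N(v̂_N) > Â_N'(v) for all v ∈ (v̂_N, 1]; consequently P_N(v̂_N)(v - 1/2) > Â_N(v) for all v ∈ (v̂_N, 1]. -/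
/-!
With `q = v̂^(N-1)` and `c = 2N v̂/(N+1)`, the function `Â_N` is the parabola `q v²/2` continued
to the left of `c` by its tangent line there, so it is `C¹` with derivative `q · max v c ≤ q`.
Since `v̂ < 1`, the average `P_N(v̂)` of `1, v̂, …, v̂^(N-1)` exceeds its smallest term `q`. Hence
`v ↦ P_N(v̂)(v - 1/2) - Â_N(v)` is strictly increasing on `[v̂, 1]`, and it vanishes at `v̂` by
the defining equation of `v̂`.
-/

open Set Filter

theorem hasDerivAt_ite_le {f g : ℝ → ℝ} {c d : ℝ} (hf : HasDerivAt f d c)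
    (hg : HasDerivAt g d c) (hfg : f c = g c) :
    HasDerivAt (fun x ↦ if x ≤ c then f x else g x) d c := by
  have hleft : HasDerivWithinAt (fun x ↦ if x ≤ c then f x else g x) d (Iic c) c :=
    hf.hasDerivWithinAt.congr (fun x hx ↦ if_pos hx) (if_pos le_rfl)
  have hright : HasDerivWithinAt (fun x ↦ if x ≤ c then f x else g x) d (Ici c) c := by
    refine hg.hasDerivWithinAt.congr (fun x hx ↦ ?_) (by simp [hfg])
    rcases (mem_Ici.mp hx).eq_or_lt with rfl | hlt
    · simp [hfg]
    · exact if_neg hlt.not_ge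
  simpa [Iic_union_Ici] using hleft.union hright

noncomputable def tangentExtendedParabola (q c v : ℝ) : ℝ :=
  if v ≤ c then q * c * (v - c / 2) else q * v ^ 2 / 2

theorem hasDerivAt_tangentExtendedParabola (q c v : ℝ) :
    HasDerivAt (tangentExtendedParabola q c) (q * max v c) v := by
  have hline : ∀ x, HasDerivAt (fun y ↦ q * c * (y - c / 2)) (q * c) x := fun x ↦ by
    simpa using ((hasDerivAt_id x).sub_const (c / 2)).const_mul (q * c)
  have hparabola : ∀ x, HasDerivAt (fun y ↦ q * y ^ 2 / 2) (q * x) x := fun x ↦ by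
    refine (((hasDerivAt_pow 2 x).const_mul q).div_const 2).congr_deriv ?_
    push_cast
    ring
  rcases lt_trichotomy v c with hlt | rfl | hgt
  · rw [max_eq_right hlt.le]
    refine (hline v).congr_of_eventuallyEq ?_
    filter_upwards [Iio_mem_nhds hlt] with x hx
    exact if_pos (le_of_lt hx)
  · rw [max_self]
    exact hasDerivAt_ite_le (hline v) (hparabola v) (by ring)
  · rw [max_eq_left hgt.le]
    refine (hparabola v).congr_of_eventuallyEq ?_
    filter_upwards [Ioi_mem_nhds hgt] with x hx
    exact if_neg (not_le.mpr hx)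

theorem pow_pred_lt_average_pow {x : ℝ} (hx₀ : 0 ≤ x) (hx₁ : x < 1) {N : ℕ} (hN : 2 ≤ N) :
    x ^ (N - 1) < (1 / N) * ∑ j ∈ Finset.range N, x ^ j := by
  have hsum : ∑ _j ∈ Finset.range N, x ^ (N - 1) < ∑ j ∈ Finset.range N, x ^ j := by
    refine Finset.sum_lt_sum (fun j hj ↦ ?_) ⟨0, Finset.mem_range.mpr (by omega), ?_⟩
    · exact pow_le_pow_of_le_one hx₀ hx₁.le (by have := Finset.mem_range.mp hj; omega)
    · simpa using pow_lt_one₀ hx₀ hx₁ (by omega)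
  rw [Finset.sum_const, Finset.card_range, nsmul_eq_mul] at hsum
  have hN₀ : (0 : ℝ) < N := by positivity
  rw [one_div_mul_eq_div, lt_div_iff₀ hN₀]
  linarith

theorem tangentExtendedParabola_pow_pred {N : ℕ} (hN : 1 ≤ N) (x v : ℝ) :
    tangentExtendedParabola (x ^ (N - 1)) (2 * N / (N + 1) * x) v =
      if v ≤ 2 * N / (N + 1) * x then
        (2 * N / (N + 1)) * x ^ N * (v - (N / (N + 1)) * x)
      else x ^ (N - 1) * v ^ 2 / 2 := by
  have hpow : x ^ N = x ^ (N - 1) * x := by rw [← pow_succ, Nat.sub_add_cancel hN]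
  rw [tangentExtendedParabola, hpow]
  congr 1
  field_simp

theorem two_mul_div_succ_mul_mem_Ioo {N : ℕ} (hN : 2 ≤ N) {x : ℝ}
    (hx : x ∈ Ioo (0 : ℝ) ((N + 1) / (2 * N))) : 2 * N / (N + 1) * x ∈ Ioo x 1 := by
  have hN₀ : (0 : ℝ) < N := by positivity
  constructor
  · rw [lt_mul_iff_one_lt_left hx.1, one_lt_div (by positivity)]
    exact_mod_cast (by omega : N + 1 < 2 * N)
  · calc 2 * N / (N + 1) * x < 2 * N / (N + 1) * ((N + 1) / (2 * N)) :=
          mul_lt_mul_of_pos_left hx.2 (by positivity)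
      _ = 1 := by field_simp

theorem lt_of_hasDerivAt_lt {f g f' g' : ℝ → ℝ} {a b : ℝ}
    (hf : ∀ x ∈ Icc a b, HasDerivAt f (f' x) x) (hg : ∀ x ∈ Icc a b, HasDerivAt g (g' x) x)
    (hlt : ∀ x ∈ Ioo a b, f' x < g' x) (ha : f a = g a) {x : ℝ} (hx : x ∈ Ioc a b) :
    f x < g x := by
  have hderiv : ∀ y ∈ Icc a b, HasDerivAt (fun y ↦ g y - f y) (g' y - f' y) y :=
    fun y hy ↦ (hg y hy).fun_sub (hf y hy)
  have hmono : StrictMonoOn (fun y ↦ g y - f y) (Icc a b) := by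
    refine strictMonoOn_of_hasDerivWithinAt_pos (f' := fun y ↦ g' y - f' y)
      (convex_Icc a b) (fun y hy ↦ (hderiv y hy).continuousAt.continuousWithinAt)
      (fun y hy ↦ ?_) (fun y hy ↦ ?_)
    · rw [interior_Icc] at hy ⊢
      exact (hderiv y (Ioo_subset_Icc_self hy)).hasDerivWithinAt
    · rw [interior_Icc] at hy
      exact sub_pos.mpr (hlt y hy)
  have := hmono ⟨le_rfl, hx.1.le.trans hx.2⟩ (Ioc_subset_Icc_self hx) hx.1
  simp only [ha, sub_self, sub_pos] at this
  exact this

theorem cap_bid_optimal_above_cutoff (N : ℕ) (hN : 2 ≤ N)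
    (A : ℝ → ℝ) (hA : ∀ v, A v = v ^ (N + 1) * (2 * N) / (N + 1) ^ 2)
    (P : ℝ → ℝ) (hP : ∀ v, P v = (1 / N) * ∑ j ∈ Finset.range N, v ^ j)
    (vhat : ℝ) (hvhat : vhat ∈ Set.Ioo (1/2 : ℝ) ((N + 1) / (2 * N)))
    (heq : A vhat = (vhat - 1 / 2) * P vhat)
    (Ahat : ℝ → ℝ)
    (hAhat : ∀ v, Ahat v =
      if v ≤ 2 * N / (N + 1) * vhat then
        (2 * N / (N + 1)) * vhat ^ N * (v - (N / (N + 1)) * vhat)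
      else vhat ^ (N - 1) * v ^ 2 / 2) :
    (∃ A' : ℝ → ℝ, ContinuousOn A' (Set.Ioc vhat 1) ∧
        (∀ v ∈ Set.Ioc vhat 1, HasDerivWithinAt Ahat (A' v) (Set.Ioc vhat 1) v) ∧
        (∀ v ∈ Set.Ioc vhat 1, P vhat > A' v)) ∧
      Tendsto Ahat (nhdsWithin vhat (Set.Ioi vhat)) (nhds (A vhat)) ∧
      (∀ v ∈ Set.Ioc vhat 1, P vhat * (v - 1 / 2) > Ahat v) := by
  obtain ⟨hv_half, hv_ub⟩ := hvhat
  set q := vhat ^ (N - 1)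
  set c := 2 * N / (N + 1) * vhat
  have hAhat_eq : Ahat = tangentExtendedParabola q c :=
    funext fun v ↦ by rw [hAhat, tangentExtendedParabola_pow_pred (by omega)]
  obtain ⟨hvhat_lt_c, hc_lt_one⟩ :=
    two_mul_div_succ_mul_mem_Ioo hN ⟨by linarith, hv_ub⟩
  have hslope : ∀ v ≤ 1, q * max v c < P vhat := fun v hv ↦
    calc q * max v c ≤ q := mul_le_of_le_one_right (by positivity) (max_le hv hc_lt_one.le)
      _ < P vhat := hP vhat ▸ pow_pred_lt_average_pow (by linarith) (by linarith) hN
  have hA_vhat : A vhat = Ahat vhat := by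
    rw [hA, hAhat, if_pos hvhat_lt_c.le, pow_succ]
    field_simp
    ring
  have hAhat_deriv : ∀ v, HasDerivAt Ahat (q * max v c) v := hAhat_eq ▸ hasDerivAt_tangentExtendedParabola q c
  refine ⟨⟨fun v ↦ q * max v c, by fun_prop, fun v _ ↦ (hAhat_deriv v).hasDerivWithinAt,
    fun v hv ↦ hslope v hv.2⟩, ?_, fun v hv ↦ ?_⟩
  · rw [hA_vhat]
    exact (hAhat_deriv vhat).continuousAt.tendsto.mono_left nhdsWithin_le_nhds
  · refine lt_of_hasDerivAt_lt (g := fun v ↦ P vhat * (v - 1 / 2))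
      (fun x _ ↦ hAhat_deriv x) (fun x _ ↦ ?_) (fun x hx ↦ hslope x hx.2.le)
      (by rw [← hA_vhat, heq, mul_comm]) hv
    simpa only [mul_one] using ((hasDerivAt_id' x).sub_const (1 / 2)).const_mul (P vhat)
end

section
/- Fix N ≥ 2 and w̄ > 2. For fixed v ∈ [0,1], the function b ↦ ((N+1)/(2N)·b)^{N-1} · (b/w̄) · (v - b/2), defined for b ∈ [0, 2N/(N+1)], attains its maximum at b = 2N/(N+1)·v, and this b also maximizes the full payoff π(b) that equals the above for b ≤ 2N/(N+1), equals (b/w̄)(v - b/2) for b ∈ (2N/(N+1), w̄], and equals v - w̄/2 for b > w̄. -/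
/-!
Write `C = 2N/(N+1)` and `t = b / C`. On `[0, C]` the payoff is a positive multiple of
`t^N ((N+1) v - N t)`, which by convexity of `x ↦ x^(N+1)` (its tangent line at `t`, evaluated
at `v`) is at most `v^(N+1)`, the value at `t = v`. Above `C` the payoff `(b/w̄)(v - b/2)`
decreases in `b` because `C > 1 ≥ v`, so it is dominated by its value at `C`, and beyond `w̄`
it is negative.
-/

open Set

/-- The tangent-line inequality for `x ↦ x ^ (n + 1)` at `t`, evaluated at `v`. -/
theorem pow_mul_sub_le_pow_succ (n : ℕ) {t v : ℝ} (ht : 0 ≤ t) (hv : 0 ≤ v) :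
    t ^ n * ((n + 1) * v - n * t) ≤ v ^ (n + 1) := by
  rcases ht.eq_or_lt with rfl | ht
  · rcases n with _ | n <;> simp [hv]
  have bernoulli := one_add_mul_le_pow (show (-2 : ℝ) ≤ v / t - 1 by
    have := div_nonneg hv ht.le; linarith) (n + 1)
  calc t ^ n * ((n + 1) * v - n * t) = t ^ (n + 1) * (1 + (n + 1 : ℕ) * (v / t - 1)) := by
        push_cast; field_simp; ring
    _ ≤ t ^ (n + 1) * (1 + (v / t - 1)) ^ (n + 1) := by gcongr
    _ = v ^ (n + 1) := by rw [← mul_pow]; field_simp; ring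

theorem mul_sub_half_le_of_le {v c b : ℝ} (hvc : v ≤ c) (hcb : c ≤ b) :
    b * (v - b / 2) ≤ c * (v - c / 2) := by
  nlinarith [mul_nonneg (sub_nonneg.2 hcb) (show 0 ≤ b + c - 2 * v by linarith)]

/-- The payoff of a bid `b ≤ 2N/(N+1)` of a weak bidder with value `v`. -/
noncomputable def lowBidPayoff (N : ℕ) (w v b : ℝ) : ℝ :=
  ((N + 1) / (2 * N) * b) ^ (N - 1) * (b / w) * (v - b / 2)

section lowBidPayoff

variable {N : ℕ} (w v : ℝ)

theorem lowBidPayoff_eq (hN : N ≠ 0) (b : ℝ) :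
    lowBidPayoff N w v b = 2 * N / ((N + 1) ^ 2 * w) *
      (((N + 1) / (2 * N) * b) ^ N * ((N + 1) * v - N * ((N + 1) / (2 * N) * b))) := by
  obtain ⟨n, rfl⟩ := Nat.exists_eq_succ_of_ne_zero hN
  simp only [lowBidPayoff, Nat.succ_sub_one, pow_succ]
  field_simp

theorem lowBidPayoff_le (hN : N ≠ 0) (hw : 0 ≤ w) (hv : 0 ≤ v) {b : ℝ} (hb : 0 ≤ b) :
    lowBidPayoff N w v b ≤ lowBidPayoff N w v (2 * N / (N + 1) * v) := by
  have hN' : (N : ℝ) ≠ 0 := Nat.cast_ne_zero.2 hN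
  rw [lowBidPayoff_eq w v hN, lowBidPayoff_eq w v hN,
    show (N + 1) / (2 * N) * (2 * N / (N + 1) * v) = v by field_simp]
  refine mul_le_mul_of_nonneg_left ?_ (by positivity)
  calc _ ≤ v ^ (N + 1) := pow_mul_sub_le_pow_succ N (by positivity) hv
    _ = v ^ N * ((N + 1) * v - N * v) := by ring

theorem lowBidPayoff_zero : lowBidPayoff N w v 0 = 0 := by
  simp [lowBidPayoff]

theorem lowBidPayoff_cap (hN : N ≠ 0) :
    lowBidPayoff N w v (2 * N / (N + 1)) = 2 * N / (N + 1) / w * (v - 2 * N / (N + 1) / 2) := by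
  have hN' : (N : ℝ) ≠ 0 := Nat.cast_ne_zero.2 hN
  rw [lowBidPayoff, show (N + 1) / (2 * N) * (2 * N / (N + 1) : ℝ) = 1 by field_simp, one_pow,
    one_mul]

end lowBidPayoff

theorem asymmetric_foc (N : ℕ) (hN : 2 ≤ N) (wbar : ℝ) (hwbar : 2 < wbar)
    (v : ℝ) (hv : v ∈ Set.Icc (0 : ℝ) 1)
    (π : ℝ → ℝ)
    (hπ : ∀ b, π b =
      if b ≤ 2 * N / (N + 1) then ((N + 1) / (2 * N) * b) ^ (N - 1) * (b / wbar) * (v - b / 2)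
      else if b ≤ wbar then (b / wbar) * (v - b / 2)
      else v - wbar / 2) :
    (∀ b ∈ Set.Icc (0 : ℝ) (2 * N / (N + 1)),
        ((N + 1) / (2 * N) * b) ^ (N - 1) * (b / wbar) * (v - b / 2) ≤
          π (2 * N / (N + 1) * v)) ∧
      ∀ b : ℝ, 0 ≤ b → π b ≤ π (2 * N / (N + 1) * v) := by
  obtain ⟨hv0, hv1⟩ := hv
  have hN0 : N ≠ 0 := by omega
  have hw : 0 ≤ wbar := by linarith
  set C : ℝ := 2 * N / (N + 1)
  have hC0 : 0 ≤ C := by positivity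
  have hC1 : 1 ≤ C := by
    rw [le_div_iff₀ (by positivity)]
    linarith [show (2 : ℝ) ≤ N by exact_mod_cast hN]
  have hπCv : π (C * v) = lowBidPayoff N wbar v (C * v) := by
    rw [hπ, if_pos (mul_le_of_le_one_right hC0 hv1)]
    rfl
  have low : ∀ b ∈ Icc 0 C, lowBidPayoff N wbar v b ≤ π (C * v) := fun b hb =>
    hπCv ▸ lowBidPayoff_le wbar v hN0 hw hv0 hb.1
  refine ⟨low, fun b hb => ?_⟩
  rw [hπ b]
  split_ifs with hbC hbw
  · exact low b ⟨hb, hbC⟩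
  · calc b / wbar * (v - b / 2) = b * (v - b / 2) / wbar := by ring
      _ ≤ C * (v - C / 2) / wbar := by
        gcongr ?_ / _
        exact mul_sub_half_le_of_le (by linarith) (by linarith)
      _ = lowBidPayoff N wbar v C := by rw [lowBidPayoff_cap wbar v hN0]; ring
      _ ≤ π (C * v) := low C ⟨hC0, le_rfl⟩
  · linarith [low 0 ⟨le_rfl, hC0⟩, lowBidPayoff_zero (N := N) wbar v]
end

section
/- Let w be a random variable on [0, w̄] with continuous positive density g and CDF G, let v̄ ∈ (0, w̄), and let b̄_∞ ∈ (v̄, w̄) satisfy E[w | w ≤ b̄_∞] = v̄. Then E[min(b̄_∞, w)] = (1 - G(b̄_∞))·b̄_∞ + G(b̄_∞)·E[w | w ≤ b̄_∞] > v̄. -/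
/-! Below `b̄_∞` the minimum is `w` and above it is `b̄_∞`, so the revenue is the convex combination
`(1 - G b̄_∞) b̄_∞ + G b̄_∞ v̄`; both weights are positive because `g` is, and `b̄_∞ > v̄`. -/

open MeasureTheory intervalIntegral

theorem integral_min_mul_eq {g : ℝ → ℝ} {a b c : ℝ} (hab : a ≤ b) (hbc : b ≤ c)
    (hg : IntervalIntegrable g volume a c) :
    ∫ x in a..c, min b x * g x = (∫ x in a..b, x * g x) + b * ∫ x in b..c, g x := by
  have hmin : IntervalIntegrable (fun x => min b x * g x) volume a c :=
    hg.continuousOn_mul (continuous_const.min continuous_id).continuousOn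
  have hb_mem : b ∈ Set.uIcc a c := by rw [Set.uIcc_of_le (hab.trans hbc)]; exact ⟨hab, hbc⟩
  have below : ∫ x in a..b, min b x * g x = ∫ x in a..b, x * g x := by
    refine integral_congr fun x hx => ?_
    rw [Set.uIcc_of_le hab] at hx
    simp only [min_eq_right hx.2]
  have above : ∫ x in b..c, min b x * g x = b * ∫ x in b..c, g x := by
    rw [← intervalIntegral.integral_const_mul]
    refine integral_congr fun x hx => ?_
    rw [Set.uIcc_of_le hbc] at hx
    simp only [min_eq_left hx.1]
  rw [← integral_add_adjacent_intervals (hmin.mono_set (Set.uIcc_subset_uIcc_left hb_mem))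
      (hmin.mono_set (Set.uIcc_subset_uIcc_right hb_mem)),
    below, above]

theorem limit_revenue_exceeds_vbar_general (wbar vbar : ℝ) (hv : vbar ∈ Set.Ioo 0 wbar)
    (g : ℝ → ℝ) (hg_cont : ContinuousOn g (Set.Icc 0 wbar))
    (hg_pos : ∀ x ∈ Set.Icc 0 wbar, 0 < g x)
    (G : ℝ → ℝ) (hG : ∀ b, G b = ∫ x in (0:ℝ)..b, g x)
    (hG_cdf : G wbar = 1)
    (binf : ℝ) (hbinf : binf ∈ Set.Ioo vbar wbar)
    (hmean : (1 / G binf) * ∫ x in (0:ℝ)..binf, x * g x = vbar) :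
    (∫ x in (0:ℝ)..wbar, min binf x * g x) =
        (1 - G binf) * binf + G binf * ((1 / G binf) * ∫ x in (0:ℝ)..binf, x * g x) ∧
      vbar < ∫ x in (0:ℝ)..wbar, min binf x * g x := by
  obtain ⟨hv_pos, -⟩ := hv
  obtain ⟨hvb, hbw⟩ := hbinf
  have hb_pos : 0 < binf := hv_pos.trans hvb
  have hb_mem : binf ∈ Set.uIcc 0 wbar := by
    rw [Set.uIcc_of_le (hb_pos.trans hbw).le]; exact ⟨hb_pos.le, hbw.le⟩
  have hg_int : IntervalIntegrable g volume 0 wbar :=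
    hg_cont.intervalIntegrable_of_Icc (hb_pos.trans hbw).le
  have hG_pos : 0 < G binf := hG binf ▸
    intervalIntegral_pos_of_pos_on (hg_int.mono_set (Set.uIcc_subset_uIcc_left hb_mem))
      (fun x hx => hg_pos x ⟨hx.1.le, hx.2.le.trans hbw.le⟩) hb_pos
  have htail_pos : 0 < ∫ x in binf..wbar, g x :=
    intervalIntegral_pos_of_pos_on (hg_int.mono_set (Set.uIcc_subset_uIcc_right hb_mem))
      (fun x hx => hg_pos x ⟨(hb_pos.trans hx.1).le, hx.2.le⟩) hbw
  have htail : ∫ x in binf..wbar, g x = 1 - G binf := by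
    rw [← hG_cdf, hG, hG, ← integral_add_adjacent_intervals
      (hg_int.mono_set (Set.uIcc_subset_uIcc_left hb_mem))
      (hg_int.mono_set (Set.uIcc_subset_uIcc_right hb_mem))]
    ring
  have hrevenue : ∫ x in (0:ℝ)..wbar, min binf x * g x =
      (1 - G binf) * binf + G binf * ((1 / G binf) * ∫ x in (0:ℝ)..binf, x * g x) := by
    rw [integral_min_mul_eq hb_pos.le hbw.le hg_int, htail]
    field_simp
    ring
  have hG_lt_one : G binf < 1 := by linarith
  refine ⟨hrevenue, ?_⟩
  rw [hrevenue, hmean]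
  nlinarith [mul_pos (sub_pos.2 hG_lt_one) (sub_pos.2 hvb)]

theorem limit_revenue_exceeds_vbar (wbar vbar : ℝ) (hv : vbar ∈ Set.Ioo 0 wbar)
    (g : ℝ → ℝ) (hg_cont : ContinuousOn g (Set.Icc 0 wbar))
    (hg_pos : ∀ x ∈ Set.Icc 0 wbar, 0 < g x)
    (hg_zero : ∀ x ∉ Set.Icc 0 wbar, g x = 0)
    (G : ℝ → ℝ) (hG : ∀ b, G b = ∫ x in (0:ℝ)..b, g x)
    (hG_cdf : G wbar = 1)
    (binf : ℝ) (hbinf : binf ∈ Set.Ioo vbar wbar)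
    (hmean : (1 / G binf) * ∫ x in (0:ℝ)..binf, x * g x = vbar) :
    (∫ x in (0:ℝ)..wbar, min binf x * g x) =
        (1 - G binf) * binf + G binf * ((1 / G binf) * ∫ x in (0:ℝ)..binf, x * g x) ∧
      vbar < ∫ x in (0:ℝ)..wbar, min binf x * g x :=
  limit_revenue_exceeds_vbar_general wbar vbar hv g hg_cont hg_pos G hG hG_cdf binf hbinf hmean
end
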